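/- With P_i, Q_i as defined (P_i = 1\e^i, Q_i = P_i\Q_{i+1}, Q_{n-1} = P_{n-1}, where 1\e^n = 0, 1\e^{n-1} > 0, 0 < e < 1, n > 1), the following hold: (i) Q_1\(1\Q_1) = 0, and (ii) (1\Q_1)\Q_1 ≤ e. -/
import Mathlib


structure BCK (A : Type*) where
  zero : A
  sub : A → A → A
  ax1 : ∀ x y z, sub (sub (sub x y) (sub x z)) (sub z y) = zero
  ax2 : ∀ x, sub x zero = x
  ax3 : ∀ x, sub zero x = zero
  ax4 : ∀ x y, sub x y = zero → sub y x = zero → x = y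

def BCK.le {A : Type*} (B : BCK A) (a b : A) : Prop := B.sub a b = B.zero

def BCK.iterSub {A : Type*} (B : BCK A) (a b : A) : ℕ → A
  | 0 => a
  | n + 1 => B.sub (B.iterSub a b n) b

namespace BCK

variable {A : Type*} (B : BCK A)

theorem sub_self (x : A) : B.sub x x = B.zero := by
  have h := B.ax1 x B.zero B.zero
  rwa [B.ax2, B.ax3, B.ax2] at h

theorem sub_le_self (x y : A) : B.sub (B.sub x y) x = B.zero := by
  have h := B.ax1 x y B.zero
  rwa [B.ax2, B.ax3, B.ax2] at h

theorem sub_sub_le (x y : A) : B.sub (B.sub x (B.sub x y)) y = B.zero := by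
  have h := B.ax1 x B.zero y
  rwa [B.ax2, B.ax2] at h

theorem le_trans' {a b c : A} (h1 : B.sub a b = B.zero) (h2 : B.sub b c = B.zero) :
    B.sub a c = B.zero := by
  have h := B.ax1 a c b
  rwa [h1, B.ax2, h2, B.ax2] at h

theorem mono_left {a b : A} (x : A) (h : B.sub a b = B.zero) :
    B.sub (B.sub a x) (B.sub b x) = B.zero := by
  have h' := B.ax1 a x b
  rwa [h, B.ax2] at h'

theorem anti_right {a b : A} (x : A) (h : B.sub a b = B.zero) :
    B.sub (B.sub x b) (B.sub x a) = B.zero := by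
  have h' := B.ax1 x b a
  rwa [h, B.ax2] at h'

theorem exchange_le (x y z : A) :
    B.sub (B.sub (B.sub x y) z) (B.sub (B.sub x z) y) = B.zero := by
  have h1 : B.sub (B.sub (B.sub x y) z) (B.sub (B.sub x y) (B.sub x (B.sub x z))) = B.zero :=
    B.anti_right _ (B.sub_sub_le x z)
  have h2 : B.sub (B.sub (B.sub x y) (B.sub x (B.sub x z))) (B.sub (B.sub x z) y) = B.zero :=
    B.ax1 x y (B.sub x z)
  exact B.le_trans' h1 h2

theorem exchange (x y z : A) :
    B.sub (B.sub x y) z = B.sub (B.sub x z) y :=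
  B.ax4 _ _ (B.exchange_le x y z) (B.exchange_le x z y)

end BCK

theorem bck_Q_one_properties {A : Type*} (B : BCK A) (one e : A)
    (htop : ∀ x : A, B.sub x one = B.zero)
    (he0 : e ≠ B.zero) (he1 : e ≠ one)
    (n : ℕ) (hn : 1 < n)
    (hzero : B.iterSub one e n = B.zero)
    (hnonzero : B.iterSub one e (n - 1) ≠ B.zero)
    (P Q : ℕ → A)
    (hP : ∀ i, P i = B.iterSub one e i)
    (hQtop : Q (n - 1) = P (n - 1))
    (hQ : ∀ i, i < n - 1 → Q i = B.sub (P i) (Q (i + 1))) :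
    B.sub (Q 1) (B.sub one (Q 1)) = B.zero ∧
    B.le (B.sub (B.sub one (Q 1)) (Q 1)) e := by
  -- successor formula for P
  have hPs : ∀ j, P (j + 1) = B.sub (P j) e := by
    intro j
    rw [hP, hP]
    rfl
  -- P (n-1) ≤ e
  have hPn1 : B.sub (P (n - 1)) e = B.zero := by
    obtain ⟨m, hm⟩ : ∃ m, n = m + 1 := ⟨n - 1, by omega⟩
    have : n - 1 = m := by omega
    rw [this, hP]
    show B.iterSub one e (m + 1) = B.zero
    rw [← hm]
    exact hzero
  -- Main invariant, by induction on the distance d from the top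
  have main : ∀ d i, i + 1 + d = n - 1 →
      B.sub (Q (i + 1)) (B.sub (P i) (Q (i + 1))) = B.zero ∧
      B.sub (B.sub (B.sub (P i) (Q (i + 1))) (Q (i + 1))) e = B.zero := by
    intro d
    induction d with
    | zero =>
      intro i hi
      simp only [Nat.add_zero] at hi
      have hQi : Q (i + 1) = B.sub (P i) e := by rw [hi, hQtop, ← hi, hPs]
      constructor
      · -- (c\e) ≤ c\(c\e)  since  c\e ≤ e
        have hle : B.sub (B.sub (P i) e) e = B.zero := by
          rw [← hPs, hi]; exact hPn1
        have := B.anti_right (P i) hle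
        rw [hQi]
        exact this
      · -- (c\(c\e))\(c\e) ≤ c\(c\e) ≤ e
        rw [hQi]
        exact B.le_trans' (B.sub_le_self _ _) (B.sub_sub_le (P i) e)
    | succ d ih =>
      intro i hi
      obtain ⟨ih1, ih2⟩ := ih (i + 1) (by omega)
      set c := P i with hc
      set q := Q (i + 2) with hqdef
      have hQ1 : Q (i + 1) = B.sub (B.sub c e) q := by
        rw [hQ (i + 1) (by omega), hPs]
      have hQ1' : Q (i + 1) = B.sub (B.sub c q) e := by
        rw [hQ1, B.exchange]
      rw [hPs] at ih1 ih2
      -- ih1 : q ≤ Q(i+1),  ih2 : Q(i+1)\q ≤ e  (where Q(i+1) = (c\e)\q)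
      constructor
      · -- Q(i+1) ≤ c \ Q(i+1)
        have h1 : B.sub (B.sub (B.sub c q) (B.sub c (Q (i + 1)))) (B.sub (Q (i + 1)) q) =
            B.zero := B.ax1 c q (Q (i + 1))
        have h2 : B.sub (B.sub (Q (i + 1)) q) e = B.zero := by rw [hQ1]; exact ih2
        have h3 : B.sub (B.sub (B.sub c q) (B.sub c (Q (i + 1)))) e = B.zero :=
          B.le_trans' h1 h2
        have h4 : B.sub (B.sub (B.sub c q) e) (B.sub c (Q (i + 1))) = B.zero := by
          rw [B.exchange]; exact h3
        rw [← hQ1'] at h4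
        exact h4
      · -- (c\Q(i+1))\Q(i+1) ≤ (c\q)\Q(i+1) = (c\q)\((c\q)\e) ≤ e
        have hq_le : B.sub q (Q (i + 1)) = B.zero := by rw [hQ1]; exact ih1
        have h1 : B.sub (B.sub c (Q (i + 1))) (B.sub c q) = B.zero := B.anti_right c hq_le
        have h2 : B.sub (B.sub (B.sub c (Q (i + 1))) (Q (i + 1)))
            (B.sub (B.sub c q) (Q (i + 1))) = B.zero := B.mono_left _ h1
        have h3 : B.sub (B.sub (B.sub c q) (Q (i + 1))) e = B.zero := by
          rw [hQ1']
          exact B.sub_sub_le (B.sub c q) e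
        exact B.le_trans' h2 h3
  obtain ⟨h1, h2⟩ := main (n - 2) 0 (by omega)
  have hP0 : P 0 = one := hP 0
  rw [hP0] at h1 h2
  exact ⟨h1, h2⟩
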